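/- Let $w,Q^{\bigcirc L}$ denote the probability measure on $[K]^L$ given by $wQ^{\bigcirc L}(k_1,\dots,k_L)=w_{k_1}Q_{k_1,k_2}\cdots Q_{k_{L-1},k_L}$ for a probability vector $w$ on $[K]$ and a stochastic matrix $Q$. Then for any probability vectors $w,v$ and stochastic matrices $Q,R$: $h^2\big(wQ^{\bigcirc L},\, vR^{\bigcirc L}\big) \le 1 - \rho_-^{L-1}\,\rho(w,v) \le h^2(w,v) + (L-1)\max_{k\in[K]} h^2(Q_{k,\cdot},R_{k,\cdot})$, where $\rho_- = \min_{k\in[K]} \rho(Q_{k,\cdot},R_{k,\cdot})$. -/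
import Mathlib


open MeasureTheory
open scoped ENNReal NNReal

/-- Squared Hellinger distance between two finitely supported vectors. -/
noncomputable def sqHellingerVec {ι : Type*} [Fintype ι] (a b : ι → ℝ) : ℝ :=
  (1 / 2) * ∑ k, (Real.sqrt (a k) - Real.sqrt (b k)) ^ 2

/-- Hellinger affinity between two finitely supported vectors: `ρ(a,b) = ∑ √(aₖ bₖ)`. -/
noncomputable def rhoVec {ι : Type*} [Fintype ι] (a b : ι → ℝ) : ℝ :=
  ∑ k, Real.sqrt (a k * b k)

/-- The probability vector `wQ^{∘L}` on chains of length `L = n + 1`: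
`(wQ^{∘L})(k₁,…,k_L) = w_{k₁} Q_{k₁k₂} ⋯ Q_{k_{L-1}k_L}`. -/
noncomputable def chainVec (K n : ℕ) (w : Fin K → ℝ) (Q : Fin K → Fin K → ℝ) :
    (Fin (n + 1) → Fin K) → ℝ :=
  fun k => w (k 0) * ∏ l : Fin n, Q (k l.castSucc) (k l.succ)

lemma chainVec_cons (K n : ℕ) (w : Fin K → ℝ) (Q : Fin K → Fin K → ℝ) (a : Fin K)
    (g : Fin (n+1) → Fin K) :
    chainVec K (n+1) w Q (Fin.cons a g) = w a * chainVec K n (Q a) Q g := by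
  unfold chainVec
  rw [Fin.prod_univ_succ]
  simp only [Fin.cons_zero, Fin.castSucc_zero, ← Fin.succ_castSucc, Fin.cons_succ]

lemma sum_cons {K n : ℕ} (f : (Fin (n+2) → Fin K) → ℝ) :
    ∑ k, f k = ∑ a : Fin K, ∑ g : Fin (n+1) → Fin K, f (Fin.cons a g) := by
  have h1 : ∑ k : Fin (n+2) → Fin K, f k
      = ∑ p : Fin K × (Fin (n+1) → Fin K), f (Fin.cons p.1 p.2) :=
    (Fintype.sum_equiv (Fin.consEquiv fun _ => Fin K) _ f (fun p => rfl)).symm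
  rw [h1, Fintype.sum_prod_type]

lemma sum_fin_one {K : ℕ} (f : (Fin 1 → Fin K) → ℝ) :
    ∑ k, f k = ∑ a : Fin K, f (fun _ => a) :=
  Fintype.sum_equiv (Equiv.funUnique (Fin 1) (Fin K)) f (fun a => f (fun _ => a))
    (fun k => congrArg f (funext fun i => congrArg k (Subsingleton.elim i 0)))

lemma chainVec_zero {K : ℕ} (w : Fin K → ℝ) (Q : Fin K → Fin K → ℝ) (k : Fin 1 → Fin K) :
    chainVec K 0 w Q k = w (k 0) := by
  simp [chainVec]

lemma chainVec_nonneg {K n : ℕ} (w : Fin K → ℝ) (Q : Fin K → Fin K → ℝ)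
    (hw : ∀ k, 0 ≤ w k) (hQ : ∀ k k', 0 ≤ Q k k') (k : Fin (n+1) → Fin K) :
    0 ≤ chainVec K n w Q k :=
  mul_nonneg (hw _) (Finset.prod_nonneg fun _ _ => hQ _ _)

lemma chainVec_sum_one {K : ℕ} (Q : Fin K → Fin K → ℝ) (hQ1 : ∀ k, ∑ k', Q k k' = 1) :
    ∀ (n : ℕ) (w : Fin K → ℝ), (∑ k, w k = 1) → ∑ k, chainVec K n w Q k = 1 := by
  intro n
  induction n with
  | zero => intro w hw; rw [sum_fin_one]; simpa [chainVec] using hw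
  | succ m ih =>
    intro w hw
    rw [sum_cons]
    have : ∀ a : Fin K, ∑ g : Fin (m+1) → Fin K, chainVec K (m+1) w Q (Fin.cons a g)
        = w a := by
      intro a
      simp_rw [chainVec_cons]
      rw [← Finset.mul_sum, ih (Q a) (hQ1 a), mul_one]
    simp_rw [this]; exact hw

lemma rhoVec_nonneg {ι : Type*} [Fintype ι] (a b : ι → ℝ) : 0 ≤ rhoVec a b :=
  Finset.sum_nonneg fun _ _ => Real.sqrt_nonneg _

lemma rhoVec_le_one {ι : Type*} [Fintype ι] (a b : ι → ℝ)
    (ha : ∀ k, 0 ≤ a k) (hb : ∀ k, 0 ≤ b k)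
    (ha1 : ∑ k, a k = 1) (hb1 : ∑ k, b k = 1) : rhoVec a b ≤ 1 := by
  have h : ∀ k, Real.sqrt (a k * b k) ≤ (a k + b k) / 2 := by
    intro k
    rw [Real.sqrt_mul (ha k)]
    nlinarith [sq_nonneg (Real.sqrt (a k) - Real.sqrt (b k)),
      Real.sq_sqrt (ha k), Real.sq_sqrt (hb k)]
  calc rhoVec a b ≤ ∑ k, (a k + b k) / 2 := Finset.sum_le_sum fun k _ => h k
    _ = 1 := by rw [← Finset.sum_div, Finset.sum_add_distrib, ha1, hb1]; norm_num

lemma sqHellingerVec_eq {ι : Type*} [Fintype ι] (a b : ι → ℝ)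
    (ha : ∀ k, 0 ≤ a k) (hb : ∀ k, 0 ≤ b k)
    (ha1 : ∑ k, a k = 1) (hb1 : ∑ k, b k = 1) :
    sqHellingerVec a b = 1 - rhoVec a b := by
  unfold sqHellingerVec rhoVec
  have h : ∀ k, (Real.sqrt (a k) - Real.sqrt (b k)) ^ 2
      = a k + b k - 2 * Real.sqrt (a k * b k) := by
    intro k
    rw [Real.sqrt_mul (ha k)]
    nlinarith [Real.sq_sqrt (ha k), Real.sq_sqrt (hb k)]
  simp_rw [h]
  rw [Finset.sum_sub_distrib, Finset.sum_add_distrib, ha1, hb1, ← Finset.mul_sum]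
  ring

lemma rho_chain_ge {K : ℕ} [NeZero K] (Q R : Fin K → Fin K → ℝ)
    (hQ0 : ∀ k k', 0 ≤ Q k k') (hR0 : ∀ k k', 0 ≤ R k k') :
    ∀ (n : ℕ) (w v : Fin K → ℝ), (∀ k, 0 ≤ w k) → (∀ k, 0 ≤ v k) →
    (⨅ k : Fin K, rhoVec (Q k) (R k)) ^ n * rhoVec w v ≤
      rhoVec (chainVec K n w Q) (chainVec K n v R) := by
  have hne : Nonempty (Fin K) := ⟨⟨0, Nat.pos_of_ne_zero (NeZero.ne K)⟩⟩
  set rlo := ⨅ k : Fin K, rhoVec (Q k) (R k) with hρ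
  have hρ0 : 0 ≤ rlo := le_ciInf fun k => rhoVec_nonneg _ _
  have hρle : ∀ a, rlo ≤ rhoVec (Q a) (R a) := fun a =>
    ciInf_le (Finite.bddBelow_range _) a
  intro n
  induction n with
  | zero =>
    intro w v hw hv
    rw [pow_zero, one_mul]
    unfold rhoVec
    rw [sum_fin_one (K := K) (fun k => Real.sqrt (chainVec K 0 w Q k * chainVec K 0 v R k))]
    simp [chainVec_zero]
  | succ m ih =>
    intro w v hw hv
    unfold rhoVec
    rw [sum_cons (fun k => Real.sqrt (chainVec K (m+1) w Q k * chainVec K (m+1) v R k))]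
    have key : ∀ a : Fin K,
        ∑ g : Fin (m+1) → Fin K,
          Real.sqrt (chainVec K (m+1) w Q (Fin.cons a g) * chainVec K (m+1) v R (Fin.cons a g))
        = Real.sqrt (w a * v a) * rhoVec (chainVec K m (Q a) Q) (chainVec K m (R a) R) := by
      intro a
      unfold rhoVec
      rw [Finset.mul_sum]
      refine Finset.sum_congr rfl fun g _ => ?_
      rw [chainVec_cons, chainVec_cons,
        show w a * chainVec K m (Q a) Q g * (v a * chainVec K m (R a) R g)
          = (w a * v a) * (chainVec K m (Q a) Q g * chainVec K m (R a) R g) by ring,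
        Real.sqrt_mul (mul_nonneg (hw a) (hv a))]
    simp_rw [key]
    have step : ∀ a : Fin K,
        rlo ^ (m+1) * Real.sqrt (w a * v a) ≤
          Real.sqrt (w a * v a) * rhoVec (chainVec K m (Q a) Q) (chainVec K m (R a) R) := by
      intro a
      have h1 := ih (Q a) (R a) (hQ0 a) (hR0 a)
      have h2 : rlo ^ m * rlo ≤ rlo ^ m * rhoVec (Q a) (R a) :=
        mul_le_mul_of_nonneg_left (hρle a) (pow_nonneg hρ0 m)
      calc rlo ^ (m+1) * Real.sqrt (w a * v a)
          ≤ rlo ^ m * rhoVec (Q a) (R a) * Real.sqrt (w a * v a) := by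
            rw [pow_succ]
            exact mul_le_mul_of_nonneg_right h2 (Real.sqrt_nonneg _)
        _ ≤ rhoVec (chainVec K m (Q a) Q) (chainVec K m (R a) R) * Real.sqrt (w a * v a) :=
            mul_le_mul_of_nonneg_right h1 (Real.sqrt_nonneg _)
        _ = _ := mul_comm _ _
    calc rlo ^ (m+1) * rhoVec w v = ∑ a, rlo ^ (m+1) * Real.sqrt (w a * v a) := by
          rw [← Finset.mul_sum]; rfl
      _ ≤ _ := Finset.sum_le_sum fun a _ => step a

/-- with `L = n + 1`,
`h²(wQ^{∘L}, vR^{∘L}) ≤ 1 - ρ₋^{L-1} ρ(w,v) ≤ h²(w,v) + (L-1) maxₖ h²(Q_k, R_k)`,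
where `ρ₋ = minₖ ρ(Q_k, R_k)`. -/
theorem sqHellinger_chainVec_le
    (K n : ℕ) (hK : 2 ≤ K) (hn : 1 ≤ n)
    (w v : Fin K → ℝ) (Q R : Fin K → Fin K → ℝ)
    (hw0 : ∀ k, 0 ≤ w k) (hv0 : ∀ k, 0 ≤ v k)
    (hw1 : ∑ k, w k = 1) (hv1 : ∑ k, v k = 1)
    (hQ0 : ∀ k k', 0 ≤ Q k k') (hR0 : ∀ k k', 0 ≤ R k k')
    (hQ1 : ∀ k, ∑ k', Q k k' = 1) (hR1 : ∀ k, ∑ k', R k k' = 1) :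
    sqHellingerVec (chainVec K n w Q) (chainVec K n v R) ≤
        1 - (⨅ k : Fin K, rhoVec (Q k) (R k)) ^ n * rhoVec w v ∧
      1 - (⨅ k : Fin K, rhoVec (Q k) (R k)) ^ n * rhoVec w v ≤
        sqHellingerVec w v + n * (⨆ k : Fin K, sqHellingerVec (Q k) (R k)) := by
  have hKpos : 0 < K := by omega
  have : NeZero K := ⟨hKpos.ne'⟩
  have hne : Nonempty (Fin K) := ⟨⟨0, hKpos⟩⟩
  set rlo := ⨅ k : Fin K, rhoVec (Q k) (R k) with hrlo
  have hρ0 : 0 ≤ rlo := le_ciInf fun k => rhoVec_nonneg _ _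
  have hρ1 : rlo ≤ 1 := by
    obtain ⟨k⟩ := hne
    exact le_trans (ciInf_le (Finite.bddBelow_range _) k)
      (rhoVec_le_one _ _ (hQ0 k) (hR0 k) (hQ1 k) (hR1 k))
  constructor
  · have heq := sqHellingerVec_eq (chainVec K n w Q) (chainVec K n v R)
      (chainVec_nonneg w Q hw0 hQ0) (chainVec_nonneg v R hv0 hR0)
      (chainVec_sum_one Q hQ1 n w hw1) (chainVec_sum_one R hR1 n v hv1)
    rw [heq]
    have := rho_chain_ge Q R hQ0 hR0 n w v hw0 hv0
    linarith
  · rw [sqHellingerVec_eq w v hw0 hv0 hw1 hv1]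
    -- sup bound
    obtain ⟨k₀, hk₀⟩ := Finite.exists_min (fun k : Fin K => rhoVec (Q k) (R k))
    have hmin : rlo = rhoVec (Q k₀) (R k₀) :=
      le_antisymm (ciInf_le (Finite.bddBelow_range _) k₀) (le_ciInf hk₀)
    have hsup : 1 - rlo ≤ ⨆ k : Fin K, sqHellingerVec (Q k) (R k) := by
      have h1 : sqHellingerVec (Q k₀) (R k₀) ≤ ⨆ k : Fin K, sqHellingerVec (Q k) (R k) :=
        le_ciSup (f := fun k : Fin K => sqHellingerVec (Q k) (R k)) (Finite.bddAbove_range _) k₀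
      rw [sqHellingerVec_eq _ _ (hQ0 k₀) (hR0 k₀) (hQ1 k₀) (hR1 k₀)] at h1
      rw [hmin]; exact h1
    have hbern : 1 + (n : ℝ) * (rlo - 1) ≤ rlo ^ n := by
      have := one_add_mul_le_pow (a := rlo - 1) (by linarith) n
      simpa using this
    have hρ : 0 ≤ rhoVec w v := rhoVec_nonneg w v
    have hρle1 : rhoVec w v ≤ 1 := rhoVec_le_one w v hw0 hv0 hw1 hv1
    have hpow1 : rlo ^ n ≤ 1 := pow_le_one₀ hρ0 hρ1
    have hn' : (0:ℝ) ≤ (n:ℝ) := Nat.cast_nonneg n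
    nlinarith [mul_nonneg hn' (sub_nonneg.mpr hsup),
      mul_nonneg (sub_nonneg.mpr hρle1) (sub_nonneg.mpr hpow1)]
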